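/- For every a > 0, the inverse square root linear unit (ISRLU) activation σ(z) = z/√(1 + a·z²) for z ≤ 0 and σ(z) = z for z > 0 satisfies: (i) σ is Lipschitz; (ii) σ is locally quadratic in the sense of Definition 3.1: there is an interval (c, d) with c < d < 0 on which σ is three times continuously differentiable with bounded derivatives and a point t ∈ (c,d) with σ'(t) ≠ 0 and σ''(t) ≠ 0; (iii) σ fixes the segment [1/4, 3/4] ⊆ [0,1], i.e. σ(z) = z for all z ∈ [1/4, 3/4]. -/

import Mathlib

open Set MeasureTheory Real
open scoped BigOperators ENNReal Classical NNReal

noncomputable section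

/-- A deep neural network with input dimension `dx`, output dimension `dy`:
`L` hidden layers, width vector `p` (with `p 0 = dx`, `p (L+1) = dy`),
weight matrices `W ℓ` and shift vectors `b ℓ` for the affine maps `A (ℓ+1)`. -/
structure DNN (dx dy : ℕ) where
  L : ℕ
  p : ℕ → ℕ
  hp0 : p 0 = dx
  hpL : p (L + 1) = dy
  W : (ℓ : ℕ) → Matrix (Fin (p (ℓ + 1))) (Fin (p ℓ)) ℝ
  b : (ℓ : ℕ) → Fin (p (ℓ + 1)) → ℝ

namespace DNN

variable {dx dy : ℕ}

/-- Output of the first `k` layers (affine map followed by componentwise activation). -/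
def hidden (σ : ℝ → ℝ) (net : DNN dx dy) : (k : ℕ) → (Fin (net.p 0) → ℝ) → (Fin (net.p k) → ℝ)
  | 0, x => x
  | k + 1, x => fun i => σ ((net.W k).mulVec (net.hidden σ k x) i + net.b k i)

/-- The function computed by the network: `A_{L+1} ∘ σ_L ∘ A_L ∘ ⋯ ∘ σ_1 ∘ A_1`. -/
def eval (σ : ℝ → ℝ) (net : DNN dx dy) (x : Fin dx → ℝ) : Fin dy → ℝ := fun j =>
  (net.W net.L).mulVec (net.hidden σ net.L fun i => x (Fin.cast net.hp0 i))
      (Fin.cast net.hpL.symm j)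
    + net.b net.L (Fin.cast net.hpL.symm j)

/-- width of a network : `max_{1 ≤ ℓ ≤ L} p ℓ`. -/
def width (net : DNN dx dy) : ℕ := Finset.sup (Finset.Icc 1 net.L) net.p

/-- number of nonzero parameters `|θ(h)|₀`. -/
def sparsity (net : DNN dx dy) : ℕ :=
  ∑ ℓ ∈ Finset.range (net.L + 1),
    ((Finset.univ.filter fun ij : Fin (net.p (ℓ + 1)) × Fin (net.p ℓ) =>
        net.W ℓ ij.1 ij.2 ≠ 0).card
      + (Finset.univ.filter fun i : Fin (net.p (ℓ + 1)) => net.b ℓ i ≠ 0).card)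

/-- `‖θ(h)‖ ≤ B` : all parameters bounded by `B` in absolute value. -/
def paramBound (net : DNN dx dy) (B : ℝ) : Prop :=
  ∀ ℓ ≤ net.L, (∀ i j, |net.W ℓ i j| ≤ B) ∧ (∀ i, |net.b ℓ i| ≤ B)

end DNN

/-- The class `H_{σ,dx,dy}(L, N, S, B)` of neural network functions. -/
def Hset (σ : ℝ → ℝ) (dx dy : ℕ) (L N S B : ℝ) : Set ((Fin dx → ℝ) → (Fin dy → ℝ)) :=
  {f | ∃ net : DNN dx dy, f = net.eval σ ∧ (net.L : ℝ) ≤ L ∧ (net.width : ℝ) ≤ N ∧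
    (net.sparsity : ℝ) ≤ S ∧ net.paramBound B}

/-- The class `H_{σ,dx,1}(L, N, S, B)` seen as real-valued functions. -/
def HsetScalar (σ : ℝ → ℝ) (dx : ℕ) (L N S B : ℝ) : Set ((Fin dx → ℝ) → ℝ) :=
  {f | ∃ g ∈ Hset σ dx 1 L N S B, ∀ x, f x = g x 0}

/-- The class `H_{σ,dx,dy}(L, N, S, B, F)` : networks with sup-norm over `X` at most `F`. -/
def HsetF (σ : ℝ → ℝ) (dx dy : ℕ) (L N S B F : ℝ) (X : Set (Fin dx → ℝ)) :
    Set ((Fin dx → ℝ) → (Fin dy → ℝ)) :=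
  {f | f ∈ Hset σ dx dy L N S B ∧ ∀ x ∈ X, ‖f x‖ ≤ F}

/-- The class `H_{σ,dx,1}(L, N, S, B, F)` of real-valued networks bounded by `F` on `X`. -/
def HsetScalarF (σ : ℝ → ℝ) (dx : ℕ) (L N S B F : ℝ) (X : Set (Fin dx → ℝ)) :
    Set ((Fin dx → ℝ) → ℝ) :=
  {f | f ∈ HsetScalar σ dx L N S B ∧ ∀ x ∈ X, |f x| ≤ F}

/-- The Hölder ball `C^{s,K}(U)` : all derivatives up to order `⌊s⌋` bounded, the
derivatives of order `⌊s⌋` are `(s-⌊s⌋)`-Hölder, and the Hölder norm is at most `K`. -/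
def HolderBall {dx : ℕ} {F : Type*} [NormedAddCommGroup F] [NormedSpace ℝ F]
    (s K : ℝ) (U : Set (Fin dx → ℝ)) (h : (Fin dx → ℝ) → F) : Prop :=
  ContDiff ℝ (⌊s⌋₊ : ℕ) h ∧
  ∃ (M : Fin (⌊s⌋₊ + 1) → ℝ) (C : ℝ), 0 ≤ C ∧
    (∀ k : Fin (⌊s⌋₊ + 1), ∀ x ∈ U, ‖iteratedFDeriv ℝ k.1 h x‖ ≤ M k) ∧
    (∀ x ∈ U, ∀ y ∈ U, ‖iteratedFDeriv ℝ ⌊s⌋₊ h x - iteratedFDeriv ℝ ⌊s⌋₊ h y‖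
        ≤ C * ‖x - y‖ ^ (s - (⌊s⌋₊ : ℝ))) ∧
    (∑ k, M k) + C ≤ K

/-- Right derivative `g'(x+)`. -/
def rightDeriv (g : ℝ → ℝ) (x : ℝ) : ℝ := derivWithin g (Set.Ici x) x

/-- Left derivative `g'(x-)`. -/
def leftDeriv (g : ℝ → ℝ) (x : ℝ) : ℝ := derivWithin g (Set.Iic x) x

/-- `g` is affine (linear in the sense of the paper) on the set `J`. -/
def IsAffineOn (g : ℝ → ℝ) (J : Set ℝ) : Prop := ∃ c d : ℝ, ∀ x ∈ J, g x = c * x + d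

/-- Continuous piecewise linear function: continuous, with break points `a 0 ≤ ⋯ ≤ a K`
at which the one-sided derivatives differ, and linear on each piece. -/
def ContPiecewiseLinear (g : ℝ → ℝ) : Prop :=
  Continuous g ∧
  ∃ (K : ℕ) (a : Fin (K + 1) → ℝ), Monotone a ∧
    (∀ k, leftDeriv g (a k) ≠ rightDeriv g (a k)) ∧
    IsAffineOn g (Set.Iic (a 0)) ∧ IsAffineOn g (Set.Ici (a (Fin.last K))) ∧
    ∀ i : Fin K, IsAffineOn g (Set.Icc (a i.castSucc) (a i.succ))

/-- Locally quadratic function: three times continuously differentiable with bounded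
derivatives on some interval `(a,b)`, with a point `t` where `g' t ≠ 0` and `g'' t ≠ 0`. -/
def LocallyQuadratic (g : ℝ → ℝ) : Prop :=
  ∃ a b : ℝ, a < b ∧ ContDiffOn ℝ 3 g (Set.Ioo a b) ∧
    (∃ M : ℝ, ∀ x ∈ Set.Ioo a b,
      |iteratedDeriv 1 g x| ≤ M ∧ |iteratedDeriv 2 g x| ≤ M ∧ |iteratedDeriv 3 g x| ≤ M) ∧
    ∃ t ∈ Set.Ioo a b, deriv g t ≠ 0 ∧ iteratedDeriv 2 g t ≠ 0

/-- `g` fixes a (nondegenerate) segment `I ⊆ [0,1]`, i.e. `g z = z` on `I`. -/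
def FixesSegment (g : ℝ → ℝ) : Prop :=
  ∃ c d : ℝ, c < d ∧ Set.Icc c d ⊆ Set.Icc (0 : ℝ) 1 ∧ ∀ z ∈ Set.Icc c d, g z = z

/-- Assumption (A4) on the activation function. -/
def GoodActivation (σ : ℝ → ℝ) : Prop :=
  (∃ Kσ : ℝ≥0, LipschitzWith Kσ σ) ∧ (ContPiecewiseLinear σ ∨ LocallyQuadratic σ) ∧
    FixesSegment σ

/-- `log₊ x = max(1, log x)`. -/
def logPlus (x : ℝ) : ℝ := max 1 (Real.log x)

/-- The (best) Lipschitz constant of a real-valued function. -/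
def lipConst {α : Type*} [PseudoMetricSpace α] (g : α → ℝ) : ℝ :=
  sInf {c : ℝ | 0 ≤ c ∧ ∀ x y, |g x - g y| ≤ c * dist x y}

/-
On `(-∞, 0]` the ISRLU is the inverse square root unit `z ↦ z / √(1 + a z²)`, whose derivative
`(1 + a z²)^(-3/2)` lies in `(0, 1]`. Both branches are therefore `1`-Lipschitz, and since they
meet at `0` the glued function is `1`-Lipschitz as well. Left of `0` the ISRLU coincides with
this smooth branch, whose derivatives are bounded on compact intervals and whose second
derivative `-3 a z (1 + a z²)^(-5/2)` vanishes only at `z = 0`. Right of `0` it is the identity.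
-/

lemma LipschitzWith.ite_le {α : Type*} [PseudoMetricSpace α] {K : ℝ≥0} {f g : ℝ → α}
    (hf : LipschitzWith K f) (hg : LipschitzWith K g) (b : ℝ) (hb : f b = g b) :
    LipschitzWith K fun z => if z ≤ b then f z else g z := by
  have glued {x y : ℝ} (hx : x ≤ b) (hy : b < y) : dist (f x) (g y) ≤ K * dist x y := by
    calc dist (f x) (g y) ≤ dist (f x) (f b) + dist (g b) (g y) := by
          rw [← hb]; exact dist_triangle _ _ _
      _ ≤ K * dist x b + K * dist b y := add_le_add (hf.dist_le_mul x b) (hg.dist_le_mul b y)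
      _ = K * dist x y := by
          rw [Real.dist_eq, Real.dist_eq, Real.dist_eq, abs_of_nonpos (by linarith),
            abs_of_nonpos (by linarith), abs_of_nonpos (by linarith)]
          ring
  refine LipschitzWith.of_dist_le_mul fun x y => ?_
  by_cases hx : x ≤ b <;> by_cases hy : y ≤ b <;> simp only [hx, hy, if_true, if_false]
  · exact hf.dist_le_mul x y
  · exact glued hx (not_le.1 hy)
  · rw [dist_comm, dist_comm x]; exact glued hy (not_le.1 hx)
  · exact hg.dist_le_mul x y

def LocallyQuadraticOn (g : ℝ → ℝ) (c d : ℝ) : Prop :=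
  ContDiffOn ℝ 3 g (Ioo c d) ∧
    (∃ M : ℝ, ∀ x ∈ Ioo c d,
      |iteratedDeriv 1 g x| ≤ M ∧ |iteratedDeriv 2 g x| ≤ M ∧ |iteratedDeriv 3 g x| ≤ M) ∧
    ∃ t ∈ Ioo c d, deriv g t ≠ 0 ∧ iteratedDeriv 2 g t ≠ 0

lemma exists_bound_iteratedDeriv_of_eqOn_Ioo {f g : ℝ → ℝ} {n : ℕ∞} (hf : ContDiff ℝ n f)
    {c d : ℝ} (hfg : EqOn g f (Ioo c d)) {k : ℕ} (hk : k ≤ n) :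
    ∃ M, ∀ x ∈ Ioo c d, |iteratedDeriv k g x| ≤ M := by
  obtain ⟨M, hM⟩ := isCompact_Icc.exists_bound_of_continuousOn
    (hf.continuous_iteratedDeriv k (mod_cast hk)).continuousOn (s := Icc c d)
  refine ⟨M, fun x hx => ?_⟩
  rw [hfg.iteratedDeriv_of_isOpen isOpen_Ioo k hx]
  exact hM x (Ioo_subset_Icc_self hx)

lemma locallyQuadraticOn_of_eqOn {f g : ℝ → ℝ} (hf : ContDiff ℝ 3 f) {c d t : ℝ}
    (hfg : EqOn g f (Ioo c d)) (ht : t ∈ Ioo c d) (hf₁ : deriv f t ≠ 0)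
    (hf₂ : iteratedDeriv 2 f t ≠ 0) : LocallyQuadraticOn g c d := by
  obtain ⟨M₁, hM₁⟩ := exists_bound_iteratedDeriv_of_eqOn_Ioo hf hfg (k := 1) (by norm_num)
  obtain ⟨M₂, hM₂⟩ := exists_bound_iteratedDeriv_of_eqOn_Ioo hf hfg (k := 2) (by norm_num)
  obtain ⟨M₃, hM₃⟩ := exists_bound_iteratedDeriv_of_eqOn_Ioo hf hfg (k := 3) (by norm_num)
  refine ⟨hf.contDiffOn.congr hfg, ⟨max (max M₁ M₂) M₃, fun x hx => ⟨?_, ?_, ?_⟩⟩,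
    t, ht, ?_, ?_⟩
  · exact (hM₁ x hx).trans ((le_max_left _ _).trans (le_max_left _ _))
  · exact (hM₂ x hx).trans ((le_max_right _ _).trans (le_max_left _ _))
  · exact (hM₃ x hx).trans (le_max_right _ _)
  · rwa [← iteratedDeriv_one, hfg.iteratedDeriv_of_isOpen isOpen_Ioo 1 ht, iteratedDeriv_one]
  · rwa [hfg.iteratedDeriv_of_isOpen isOpen_Ioo 2 ht]

def isru (a z : ℝ) : ℝ := z / √(1 + a * z ^ 2)

def isrlu (a z : ℝ) : ℝ := if z ≤ 0 then isru a z else z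

section

variable {a : ℝ}

lemma one_le_one_add_mul_sq (ha : 0 ≤ a) (z : ℝ) : 1 ≤ 1 + a * z ^ 2 :=
  le_add_of_nonneg_right (by positivity)

lemma one_add_mul_sq_pos (ha : 0 ≤ a) (z : ℝ) : 0 < 1 + a * z ^ 2 :=
  one_pos.trans_le (one_le_one_add_mul_sq ha z)

lemma hasDerivAt_one_add_mul_sq (a z : ℝ) :
    HasDerivAt (fun w => 1 + a * w ^ 2) (2 * a * z) z := by
  simpa [mul_comm, mul_assoc, mul_left_comm] using ((hasDerivAt_pow 2 z).const_mul a).const_add 1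

lemma contDiff_isru (ha : 0 ≤ a) {n : ℕ∞} : ContDiff ℝ n (isru a) :=
  contDiff_id.div ((contDiff_const.add (contDiff_const.mul (contDiff_id.pow 2))).sqrt
    fun z => (one_add_mul_sq_pos ha z).ne')
    fun z => (Real.sqrt_pos.2 (one_add_mul_sq_pos ha z)).ne'

lemma hasDerivAt_isru (ha : 0 ≤ a) (z : ℝ) :
    HasDerivAt (isru a) ((1 + a * z ^ 2) ^ (-(3 / 2) : ℝ)) z := by
  have hu := one_add_mul_sq_pos ha
  have hisru : isru a = fun w => w * (1 + a * w ^ 2) ^ (-(1 / 2) : ℝ) := by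
    funext w
    rw [isru, Real.sqrt_eq_rpow, Real.rpow_neg (hu w).le, div_eq_mul_inv]
  rw [hisru]
  refine ((hasDerivAt_id z).mul ((hasDerivAt_one_add_mul_sq a z).rpow_const
    (p := -(1 / 2)) (Or.inl (hu z).ne'))).congr_deriv ?_
  rw [show (-(1 / 2) : ℝ) - 1 = -(3 / 2) by norm_num,
    show (-(1 / 2) : ℝ) = 1 + -(3 / 2) by norm_num, Real.rpow_add (hu z), Real.rpow_one]
  simp only [id]
  ring

lemma deriv_isru (ha : 0 ≤ a) : deriv (isru a) = fun z => (1 + a * z ^ 2) ^ (-(3 / 2) : ℝ) :=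
  funext fun z => (hasDerivAt_isru ha z).deriv

lemma iteratedDeriv_two_isru (ha : 0 ≤ a) (z : ℝ) :
    iteratedDeriv 2 (isru a) z = -3 * a * z * (1 + a * z ^ 2) ^ (-(5 / 2) : ℝ) := by
  rw [iteratedDeriv_succ, iteratedDeriv_one, deriv_isru ha,
    ((hasDerivAt_one_add_mul_sq a z).rpow_const (p := -(3 / 2))
      (Or.inl (one_add_mul_sq_pos ha z).ne')).deriv,
    show (-(3 / 2) : ℝ) - 1 = -(5 / 2) by norm_num]
  ring

lemma lipschitzWith_isru (ha : 0 ≤ a) : LipschitzWith 1 (isru a) := by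
  refine lipschitzWith_of_nnnorm_deriv_le (fun z => (hasDerivAt_isru ha z).differentiableAt)
    fun z => ?_
  rw [← NNReal.coe_le_coe, coe_nnnorm, NNReal.coe_one, deriv_isru ha, Real.norm_eq_abs,
    abs_of_pos (Real.rpow_pos_of_pos (one_add_mul_sq_pos ha z) _)]
  exact Real.rpow_le_one_of_one_le_of_nonpos (one_le_one_add_mul_sq ha z) (by norm_num)

lemma lipschitzWith_isrlu (ha : 0 ≤ a) : LipschitzWith 1 (isrlu a) :=
  (lipschitzWith_isru ha).ite_le LipschitzWith.id 0 (by simp [isru])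

lemma isrlu_of_pos {z : ℝ} (hz : 0 < z) : isrlu a z = z :=
  if_neg hz.not_ge

lemma locallyQuadraticOn_isrlu (ha : 0 < a) {c d : ℝ} (hcd : c < d) (hd : d ≤ 0) :
    LocallyQuadraticOn (isrlu a) c d := by
  have hmid : (c + d) / 2 ∈ Ioo c d := ⟨by linarith, by linarith⟩
  have hmid_ne : (c + d) / 2 ≠ 0 := by linarith
  refine locallyQuadraticOn_of_eqOn (contDiff_isru ha.le)
    (fun z hz => if_pos (hz.2.le.trans hd)) hmid ?_ ?_
  · rw [deriv_isru ha.le]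
    exact (Real.rpow_pos_of_pos (one_add_mul_sq_pos ha.le _) _).ne'
  · rw [iteratedDeriv_two_isru ha.le]
    have hpow := Real.rpow_pos_of_pos (one_add_mul_sq_pos ha.le ((c + d) / 2)) (-(5 / 2))
    exact mul_ne_zero (mul_ne_zero (mul_ne_zero (by norm_num) ha.ne') hmid_ne) hpow.ne'

end

/-- For `a > 0`, the ISRLU activation `σ(z) = z/√(1+az²)` for `z ≤ 0`, `σ(z) = z` for
`z > 0`, is Lipschitz, locally quadratic on some interval `(c,d)` with `c < d < 0`, and
fixes the segment `[1/4, 3/4] ⊆ [0,1]`. -/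
theorem isrlu_properties (a : ℝ) (ha : 0 < a) :
    (∃ Kσ : ℝ≥0,
      LipschitzWith Kσ (fun z : ℝ => if z ≤ 0 then z / Real.sqrt (1 + a * z ^ 2) else z)) ∧
    LocallyQuadratic (fun z : ℝ => if z ≤ 0 then z / Real.sqrt (1 + a * z ^ 2) else z) ∧
    (∃ c d : ℝ, c < d ∧ d < 0 ∧
      ContDiffOn ℝ 3 (fun z : ℝ => if z ≤ 0 then z / Real.sqrt (1 + a * z ^ 2) else z)
        (Set.Ioo c d) ∧
      (∃ M : ℝ, ∀ x ∈ Set.Ioo c d,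
        |iteratedDeriv 1 (fun z : ℝ => if z ≤ 0 then z / Real.sqrt (1 + a * z ^ 2) else z) x|
            ≤ M ∧
        |iteratedDeriv 2 (fun z : ℝ => if z ≤ 0 then z / Real.sqrt (1 + a * z ^ 2) else z) x|
            ≤ M ∧
        |iteratedDeriv 3 (fun z : ℝ => if z ≤ 0 then z / Real.sqrt (1 + a * z ^ 2) else z) x|
            ≤ M) ∧
      ∃ t ∈ Set.Ioo c d,
        deriv (fun z : ℝ => if z ≤ 0 then z / Real.sqrt (1 + a * z ^ 2) else z) t ≠ 0 ∧
        iteratedDeriv 2 (fun z : ℝ => if z ≤ 0 then z / Real.sqrt (1 + a * z ^ 2) else z) t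
          ≠ 0) ∧
    ∀ z ∈ Set.Icc (1 / 4 : ℝ) (3 / 4),
      (if z ≤ 0 then z / Real.sqrt (1 + a * z ^ 2) else z) = z := by
  have hquad : LocallyQuadraticOn (isrlu a) (-2) (-1) :=
    locallyQuadraticOn_isrlu ha (by norm_num) (by norm_num)
  exact ⟨⟨1, lipschitzWith_isrlu ha.le⟩, ⟨-2, -1, by norm_num, hquad⟩,
    ⟨-2, -1, by norm_num, by norm_num, hquad⟩,
    fun z hz => isrlu_of_pos (by linarith [hz.1])⟩
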